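/- arXiv:2310.12689 — 3 statements merged into one kernel-verified Lean document; each statement's English description precedes it below -/
import Mathlib

section
/- Let d ≥ 1 and let α₁,…,αₙ be elements of the dual space (ℝ^d)^*. Fix 2 ≤ k ≤ d. Then the following are equivalent: (1) for every linear subspace V ⊆ ℝ^d of codimension k−1, at most k−1 of the functionals αᵢ vanish identically on V; (2) every k of the functionals α₁,…,αₙ (with distinct indices) are linearly independent. -/
/-!
A subspace `V` of codimension `k - 1` is annihilated exactly by the functionals in its dual
annihilator, a subspace of dimension at most `k - 1` of the dual space. So if `k` of the `αᵢ` vanish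
on `V`, they are linearly dependent. Conversely, `k` dependent `αᵢ` span a subspace of dimension
at most `k - 1`, whose dual coannihilator has codimension at most `k - 1` and hence contains a
subspace of codimension exactly `k - 1` on which all `k` of them vanish.
-/

open Module Submodule

variable {K E : Type*} [Field K] [AddCommGroup E] [Module K E]

theorem Submodule.exists_le_finrank_eq (W : Submodule K E) [FiniteDimensional K W] {m : ℕ}
    (hm : m ≤ finrank K W) : ∃ U ≤ W, finrank K U = m := by
  obtain ⟨f, hf⟩ := exists_linearIndependent_of_le_finrank hm
  refine ⟨span K (Set.range (W.subtype ∘ f)), ?_, ?_⟩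
  · rw [span_le, Set.range_comp]
    rintro _ ⟨x, -, rfl⟩
    exact x.2
  · rw [finrank_span_eq_card (hf.map' W.subtype W.ker_subtype), Fintype.card_fin]

theorem Subspace.exists_finrank_eq_le_dualCoannihilator [FiniteDimensional K E]
    (U : Subspace K (Dual K E)) {m : ℕ} (hU : finrank K U ≤ m) :
    ∃ V : Subspace K E, V ≤ U.dualCoannihilator ∧ finrank K V = finrank K E - m := by
  have := Subspace.finrank_add_finrank_dualCoannihilator_eq U
  exact U.dualCoannihilator.exists_le_finrank_eq (by omega)

theorem LinearIndependent.card_le_finrank_of_forall_mem {ι : Type*} [Fintype ι] {b : ι → E}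
    (hb : LinearIndependent K b) {W : Submodule K E} [FiniteDimensional K W]
    (hbW : ∀ i, b i ∈ W) : Fintype.card ι ≤ finrank K W :=
  (linearIndependent_iff_card_le_finrank_span.mp hb).trans <|
    Submodule.finrank_mono (span_le.mpr (Set.range_subset_iff.mpr hbW))

variable [FiniteDimensional K E] {ι : Type*} [Finite ι] {α : ι → Dual K E} {k : ℕ}

theorem linearIndependent_of_forall_ncard_vanishing_le (hk : 0 < k)
    (hα : ∀ V : Subspace K E, finrank K V = finrank K E - (k - 1) →
      {i | ∀ v ∈ V, α i v = 0}.ncard ≤ k - 1)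
    (s : Finset ι) (hs : s.card = k) : LinearIndependent K (fun i : s => α i) := by
  by_contra hdep
  have hspan : (Set.range fun i : s => α i).finrank K ≤ k - 1 := by
    rw [linearIndependent_iff_card_le_finrank_span, Fintype.card_coe, hs] at hdep
    omega
  obtain ⟨V, hVU, hV⟩ := Subspace.exists_finrank_eq_le_dualCoannihilator _ hspan
  have hsub : (s : Set ι) ⊆ {i | ∀ v ∈ V, α i v = 0} := fun i hi v hv =>
    (mem_dualCoannihilator v).mp (hVU hv) _ (subset_span ⟨⟨i, hi⟩, rfl⟩)
  have := Set.ncard_le_ncard hsub (Set.toFinite _)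
  rw [Set.ncard_coe_finset, hs] at this
  have := hα V hV
  omega

theorem ncard_vanishing_le_of_forall_linearIndependent (hk : 0 < k)
    (hα : ∀ s : Finset ι, s.card = k → LinearIndependent K (fun i : s => α i))
    (V : Subspace K E) (hV : finrank K V = finrank K E - (k - 1)) :
    {i | ∀ v ∈ V, α i v = 0}.ncard ≤ k - 1 := by
  set S := {i | ∀ v ∈ V, α i v = 0}
  by_contra! hS
  obtain ⟨t, htS, ht⟩ := Finset.exists_subset_card_eq (s := S.toFinite.toFinset) (n := k)
    (by rw [← Set.ncard_eq_toFinset_card]; omega)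
  have hmem (i : t) : α i ∈ V.dualAnnihilator :=
    (mem_dualAnnihilator _).mpr (by simpa [S] using htS i.2)
  have hle := (hα t ht).card_le_finrank_of_forall_mem hmem
  have := Subspace.finrank_add_finrank_dualAnnihilator_eq V
  rw [Fintype.card_coe, ht] at hle
  omega

theorem forall_ncard_vanishing_le_iff_forall_linearIndependent (hk : 0 < k) :
    (∀ V : Subspace K E, finrank K V = finrank K E - (k - 1) →
      {i | ∀ v ∈ V, α i v = 0}.ncard ≤ k - 1) ↔
    ∀ s : Finset ι, s.card = k → LinearIndependent K (fun i : s => α i) :=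
  ⟨linearIndependent_of_forall_ncard_vanishing_le hk,
    ncard_vanishing_le_of_forall_linearIndependent hk⟩

theorem stmt_0_general (d n k : ℕ) (hk : 2 ≤ k)
    (α : Fin n → Module.Dual ℝ (Fin d → ℝ)) :
    (∀ V : Submodule ℝ (Fin d → ℝ), Module.finrank ℝ V = d - (k - 1) →
      ({i : Fin n | ∀ v ∈ V, α i v = 0}).ncard ≤ k - 1)
    ↔ (∀ s : Finset (Fin n), s.card = k →
        LinearIndependent ℝ (fun i : s => α i)) := by
  simpa only [Module.finrank_fin_fun] using
    forall_ncard_vanishing_le_iff_forall_linearIndependent (α := α) (by omega)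

/-- The fixed-point-dimension condition is equivalent to the GKM_k
weight condition: for functionals α₁,…,αₙ on ℝ^d and 2 ≤ k ≤ d, every codimension-(k−1)
subspace annihilates at most k−1 of the αᵢ iff any k of the αᵢ are linearly independent. -/
theorem stmt_0 (d n k : ℕ) (hd : 1 ≤ d) (hk : 2 ≤ k) (hkd : k ≤ d)
    (α : Fin n → Module.Dual ℝ (Fin d → ℝ)) :
    (∀ V : Submodule ℝ (Fin d → ℝ), Module.finrank ℝ V = d - (k - 1) →
      ({i : Fin n | ∀ v ∈ V, α i v = 0}).ncard ≤ k - 1)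
    ↔ (∀ s : Finset (Fin n), s.card = k →
        LinearIndependent ℝ (fun i : s => α i)) :=
  stmt_0_general d n k hk α
end

section
/- Every proper closed subgroup H of the torus T^d = (S¹)^d is contained in a subgroup of the form of the kernel of a map T^d → S¹ of the form g ↦ χ(g)^m, where χ : T^d → S¹ is a surjective continuous homomorphism and m ≥ 1. Equivalently, there is a surjective continuous homomorphism χ : T^d → S¹ such that χ(H) is a finite subgroup of S¹. -/
/-!
Suppose no nontrivial character `x ↦ ∑ nᵢ xᵢ` of the torus vanishes on the closed subgroup `H`.
Then every nontrivial character is nontrivial on `H` as well, so it integrates to zero both against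
the Haar probability measure of the torus and against the Haar probability measure of `H` pushed
forward to the torus. Since the characters span a dense subspace of `C(T^d, ℂ)`, the two measures
coincide; but the second one vanishes on the open set `Hᶜ`, which is therefore empty.
-/

open MeasureTheory Measure TopologicalSpace Set AddCircle

theorem AddCircle.toCircle_sum {ι : Type*} {T : ℝ} (s : Finset ι) (f : ι → AddCircle T) :
    toCircle (∑ i ∈ s, f i) = ∏ i ∈ s, toCircle (f i) := by
  induction s using Finset.cons_induction <;> simp [toCircle_add, *]

theorem AddChar.integral_eq_zero_of_ne_one {G 𝕜 : Type*} [AddGroup G] [MeasurableSpace G]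
    [MeasurableAdd G] [RCLike 𝕜] (μ : Measure G) [μ.IsAddLeftInvariant] {ψ : AddChar G 𝕜}
    (hψ : ψ ≠ 1) : ∫ x, ψ x ∂μ = 0 := by
  obtain ⟨a, ha⟩ := ne_one_iff.mp hψ
  have h : ψ a * ∫ x, ψ x ∂μ = ∫ x, ψ x ∂μ := by
    simp_rw [← integral_const_mul, ← map_add_eq_mul]
    exact integral_add_left_eq_self (fun x ↦ ψ x) a
  exact by_contra fun h0 ↦ ha ((mul_eq_right₀ h0).mp h)

instance isProbabilityMeasure_addHaarMeasure_top {G : Type*} [AddGroup G] [TopologicalSpace G]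
    [IsTopologicalAddGroup G] [CompactSpace G] [Nonempty G] [MeasurableSpace G] [BorelSpace G] :
    IsProbabilityMeasure (addHaarMeasure (⊤ : PositiveCompacts G)) :=
  ⟨addHaarMeasure_self⟩

namespace ContinuousMap

variable {X : Type*} [TopologicalSpace X] [CompactSpace X] [MeasurableSpace X] [BorelSpace X]

noncomputable def integralCLM (μ : Measure X) [IsFiniteMeasure μ] : C(X, ℂ) →L[ℂ] ℂ :=
  (L1.integralCLM' ℂ).comp (toLp 1 μ ℂ)

theorem integralCLM_apply (μ : Measure X) [IsFiniteMeasure μ] (f : C(X, ℂ)) :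
    integralCLM μ f = ∫ x, f x ∂μ := by
  rw [integralCLM, ContinuousLinearMap.comp_apply, ← L1.integral_eq', L1.integral_eq_integral]
  exact integral_congr_ae (coeFn_toLp μ f)

end ContinuousMap

open ContinuousMap in
theorem MeasureTheory.Measure.ext_of_integral_eq_of_span_dense {X : Type*} [TopologicalSpace X]
    [CompactSpace X] [MeasurableSpace X] [BorelSpace X] [HasOuterApproxClosed X]
    {μ ν : Measure X} [IsFiniteMeasure μ] [IsFiniteMeasure ν] {s : Set C(X, ℂ)}
    (hs : (Submodule.span ℂ s).topologicalClosure = ⊤)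
    (h : ∀ f ∈ s, ∫ x, f x ∂μ = ∫ x, f x ∂ν) : μ = ν := by
  have hle : (Submodule.span ℂ s).topologicalClosure ≤ (integralCLM μ).eqLocus (integralCLM ν) :=
    Submodule.topologicalClosure_minimal _
      (Submodule.span_le.mpr fun f hf ↦ by simpa [integralCLM_apply] using h f hf)
      (ContinuousLinearMap.isClosed_eqLocus _ _)
  have hall (f : C(X, ℂ)) : ∫ x, f x ∂μ = ∫ x, f x ∂ν := by
    simpa [integralCLM_apply] using hle (hs ▸ Submodule.mem_top (x := f))
  refine ext_of_forall_integral_eq_of_IsFiniteMeasure fun f ↦ Complex.ofReal_injective ?_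
  rw [← integral_complex_ofReal, ← integral_complex_ofReal]
  exact hall ⟨fun x ↦ (f x : ℂ), by fun_prop⟩

namespace UnitAddTorus

variable {ι : Type*} [Fintype ι]

def intChar (n : ι → ℤ) : ContinuousAddMonoidHom (UnitAddTorus ι) UnitAddCircle where
  toFun x := ∑ i, n i • x i
  map_zero' := by simp
  map_add' x y := by simp [smul_add, Finset.sum_add_distrib]
  continuous_toFun := by fun_prop

@[simp]
theorem intChar_apply (n : ι → ℤ) (x : UnitAddTorus ι) : intChar n x = ∑ i, n i • x i := rfl

theorem intChar_surjective {n : ι → ℤ} (hn : n ≠ 0) : Function.Surjective (intChar n) := by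
  classical
  obtain ⟨j, hj⟩ := Function.ne_iff.mp hn
  intro y
  induction y using QuotientAddGroup.induction_on with
  | H r =>
    refine ⟨Pi.single j ↑(r / n j), ?_⟩
    rw [intChar_apply, Finset.sum_eq_single j (fun i _ hi ↦ by simp [hi]) (by simp)]
    simp [← coe_zsmul, mul_div_cancel₀ r (Int.cast_ne_zero.mpr hj)]

theorem exists_intChar_ne_zero {n : ι → ℤ} (hn : n ≠ 0) : ∃ x, intChar n x ≠ 0 := by
  obtain ⟨x, hx⟩ := intChar_surjective hn ((2⁻¹ : ℝ) : UnitAddCircle)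
  exact ⟨x, hx ▸ (coe_eq_zero_iff_of_mem_Ico ⟨by norm_num, by norm_num⟩).not.mpr (by norm_num)⟩

theorem mFourier_apply (n : ι → ℤ) (x : UnitAddTorus ι) :
    mFourier n x = toCircle (intChar n x) := by
  simp only [mFourier, ContinuousMap.coe_mk, fourier_apply, intChar_apply, toCircle_sum]
  exact (map_prod Circle.coeHom _ _).symm

theorem mFourier_eq_one_iff {n : ι → ℤ} {x : UnitAddTorus ι} :
    mFourier n x = 1 ↔ intChar n x = 0 := by
  rw [mFourier_apply, Circle.coe_eq_one, ← toCircle_zero (T := 1),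
    (injective_toCircle one_ne_zero).eq_iff]

noncomputable def mFourierAddChar (n : ι → ℤ) : AddChar (UnitAddTorus ι) ℂ :=
  Circle.coeHom.compAddChar (toCircle_addChar.compAddMonoidHom (intChar n).toAddMonoidHom)

@[simp]
theorem mFourierAddChar_apply (n : ι → ℤ) (x : UnitAddTorus ι) :
    mFourierAddChar n x = mFourier n x := by
  rw [mFourier_apply]
  rfl

theorem integral_mFourier_comp_eq_zero {G : Type*} [AddGroup G] [MeasurableSpace G]
    [MeasurableAdd G] (μ : Measure G) [μ.IsAddLeftInvariant] (f : G →+ UnitAddTorus ι)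
    {n : ι → ℤ} (hn : ∃ g, intChar n (f g) ≠ 0) : ∫ g, mFourier n (f g) ∂μ = 0 := by
  obtain ⟨g, hg⟩ := hn
  simpa using AddChar.integral_eq_zero_of_ne_one μ (ψ := (mFourierAddChar n).compAddMonoidHom f)
    (AddChar.ne_one_iff.mpr ⟨g, by simpa [mFourier_eq_one_iff] using hg⟩)

theorem exists_intChar_eq_zero_of_ne_top (H : AddSubgroup (UnitAddTorus ι))
    (hH : IsClosed (H : Set (UnitAddTorus ι))) (hne : H ≠ ⊤) :
    ∃ n ≠ 0, ∀ x ∈ H, intChar n x = 0 := by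
  by_contra! hsep
  have : CompactSpace H := isCompact_iff_compactSpace.mp hH.isCompact
  set μ := addHaarMeasure (⊤ : PositiveCompacts (UnitAddTorus ι))
  set μH := addHaarMeasure (⊤ : PositiveCompacts H)
  have hval : MeasurableEmbedding ((↑) : H → UnitAddTorus ι) :=
    MeasurableEmbedding.subtype_coe hH.measurableSet
  have hμ : μ = μH.map (↑) := by
    refine ext_of_integral_eq_of_span_dense span_mFourier_closure_eq_top ?_
    rintro _ ⟨n, rfl⟩
    rw [hval.integral_map]
    rcases eq_or_ne n 0 with rfl | hn
    · simp [mFourier_zero]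
    obtain ⟨h, hh, hh0⟩ := hsep n hn
    exact (integral_mFourier_comp_eq_zero μ (.id _) (exists_intChar_ne_zero hn)).trans
      (integral_mFourier_comp_eq_zero μH H.subtype ⟨⟨h, hh⟩, hh0⟩).symm
  obtain ⟨x, hx⟩ : ∃ x, x ∉ H := by simpa [AddSubgroup.eq_top_iff'] using hne
  refine hH.isOpen_compl.measure_ne_zero μ ⟨x, hx⟩ ?_
  rw [hμ, hval.map_apply, preimage_compl, Subtype.coe_preimage_self, compl_univ, measure_empty]

end UnitAddTorus

open UnitAddTorus in
/-- Every proper closed subgroup `H` of the torus `T^d = (ℝ/ℤ)^d` admits a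
surjective continuous homomorphism `χ : T^d → S¹ = ℝ/ℤ` such that `χ(H)` is finite
(equivalently, `H` is contained in the kernel of `g ↦ χ(g)^m` for some `m ≥ 1`). -/
theorem stmt_2 (d : ℕ) (H : AddSubgroup (Fin d → AddCircle (1 : ℝ)))
    (hclosed : IsClosed (H : Set (Fin d → AddCircle (1 : ℝ))))
    (hproper : H ≠ ⊤) :
    ∃ χ : ContinuousAddMonoidHom (Fin d → AddCircle (1 : ℝ)) (AddCircle (1 : ℝ)),
      Function.Surjective χ ∧ (χ '' (H : Set (Fin d → AddCircle (1 : ℝ)))).Finite ∧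
      ∃ m : ℕ, 1 ≤ m ∧ ∀ h ∈ H, m • χ h = 0 := by
  obtain ⟨n, hn, hH⟩ := exists_intChar_eq_zero_of_ne_top H hclosed hproper
  refine ⟨intChar n, intChar_surjective hn, (finite_singleton 0).subset ?_, 1, le_rfl,
    fun h hh ↦ by rw [hH h hh, smul_zero]⟩
  rintro _ ⟨h, hh, rfl⟩
  exact hH h hh
end

section
/- Let R = ℤ[t] (t of degree 2) and let p ∈ ℤ be a prime. Let N be a graded R-module equipped with elements x ∈ N of degree 2, a unit 1 ∈ N of degree 0, and an R-linear 'integration' map π : N → R of degree −10 such that π(t^a x^{b}) = t^a if b = 5 and π(t^a x^b) = 0 for b ≤ 4 (for the relevant monomials t^{γ−i} x^{i+j} appearing below). Suppose c̃ ∈ N satisfies p·c̃ = a₀ t^γ + a₁ t^{γ−1} x + a₂ t^{γ−2} x² for some integers a₀, a₁, a₂ and γ ≥ 2, and that π(c̃ x³), π(c̃ x⁴ − (a₂/p) t^{γ−2} x⁶) and the analogous expressions lie in R. Then p divides a₂, a₁, and a₀ (in that order, by applying π to p c̃·x³, then to p c̃·x⁴ − a₂ t^{γ−2}x⁶, etc.),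 and hence c̃' = c̃ − Σ_{i=0}^{2} (a_i/p) t^{γ−i} x^i satisfies p·c̃' = 0. -/
open Polynomial

/-- the integration-over-the-fiber argument. Let `R = ℤ[t]`, `N` a module
over `R` (modelling `H^*_{S¹}(M;ℤ)`) with elements `xpow i` (modelling `xⁱ`, `xpow 0 = 1`),
a multiplication-by-`x` operator `mulx`, and an `R`-linear integration map `π : N → R`
with `π(t^a xᵇ) = t^a` if `b = 5` and `0` if `b ≤ 4`. If `p·c̃ = a₀ t^γ + a₁ t^{γ−1} x +
a₂ t^{γ−2} x²` with `γ ≥ 2`, then `p ∣ a₂`, `p ∣ a₁`, `p ∣ a₀`, and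
`c̃' = c̃ − Σ (aᵢ/p) t^{γ−i} xⁱ` satisfies `p·c̃' = 0`. -/
theorem stmt_15 (p : ℤ) (hp : Prime p) {N : Type} [AddCommGroup N] [Module ℤ[X] N]
    (xpow : ℕ → N) (mulx : N →ₗ[ℤ[X]] N) (hmul : ∀ i, mulx (xpow i) = xpow (i + 1))
    (π : N →ₗ[ℤ[X]] ℤ[X])
    (hπ : ∀ (a b : ℕ), b ≤ 5 →
      π (((X : ℤ[X]) ^ a) • xpow b) = if b = 5 then (X : ℤ[X]) ^ a else 0)
    (c : N) (a₀ a₁ a₂ : ℤ) (γ : ℕ) (hγ : 2 ≤ γ)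
    (hc : p • c = a₀ • (((X : ℤ[X]) ^ γ) • xpow 0)
        + a₁ • (((X : ℤ[X]) ^ (γ - 1)) • xpow 1)
        + a₂ • (((X : ℤ[X]) ^ (γ - 2)) • xpow 2)) :
    (p ∣ a₂ ∧ p ∣ a₁ ∧ p ∣ a₀) ∧
    ∃ b₀ b₁ b₂ : ℤ, a₀ = p * b₀ ∧ a₁ = p * b₁ ∧ a₂ = p * b₂ ∧
      p • (c - (b₀ • (((X : ℤ[X]) ^ γ) • xpow 0)
        + b₁ • (((X : ℤ[X]) ^ (γ - 1)) • xpow 1)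
        + b₂ • (((X : ℤ[X]) ^ (γ - 2)) • xpow 2))) = 0 := by

  -- key: if a • X^n = p • q then p ∣ a
  have key : ∀ (a : ℤ) (n : ℕ) (q : ℤ[X]),
      ((a : ℤ[X]) * (X : ℤ[X]) ^ n = (p : ℤ[X]) * q) → p ∣ a := by
    intro a n q h
    rw [← Polynomial.C_eq_intCast a, ← Polynomial.C_eq_intCast p] at h
    have := congrArg (fun r : ℤ[X] => r.coeff n) h
    simp [Polynomial.coeff_C_mul, Polynomial.coeff_X_pow] at this
    exact ⟨q.coeff n, this⟩
  -- apply mulx three times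
  have h3 : p • (mulx (mulx (mulx c))) = a₀ • (((X : ℤ[X]) ^ γ) • xpow 3)
      + a₁ • (((X : ℤ[X]) ^ (γ - 1)) • xpow 4)
      + a₂ • (((X : ℤ[X]) ^ (γ - 2)) • xpow 5) := by
    have := congrArg mulx (congrArg mulx (congrArg mulx hc))
    simpa [map_add, map_zsmul, LinearMap.map_smul, hmul] using this
  have ha2 : p ∣ a₂ := by
    have := congrArg π h3
    simp [map_add, map_zsmul, LinearMap.map_smul, hπ 0 3, hπ 0 4, hπ 0 5,
      hπ γ 3, hπ (γ-1) 4, hπ (γ-2) 5] at this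
    exact key a₂ (γ - 2) (π (mulx (mulx (mulx c)))) this.symm
  obtain ⟨b₂, hb₂⟩ := ha2
  -- fourth power, corrected
  have h4 : p • (mulx (mulx (mulx (mulx c))) - b₂ • (((X : ℤ[X]) ^ (γ - 2)) • xpow 6))
      = a₀ • (((X : ℤ[X]) ^ γ) • xpow 4)
      + a₁ • (((X : ℤ[X]) ^ (γ - 1)) • xpow 5) := by
    have := congrArg mulx h3
    simp only [map_add, map_zsmul, LinearMap.map_smul, hmul] at this
    rw [smul_sub, this, hb₂]
    rw [mul_smul]
    abel
  have ha1 : p ∣ a₁ := by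
    have := congrArg π h4
    simp [map_add, map_sub, map_zsmul, LinearMap.map_smul,
      hπ γ 4, hπ (γ-1) 5] at this
    exact key a₁ (γ - 1) _ this.symm
  obtain ⟨b₁, hb₁⟩ := ha1
  -- fifth power, corrected
  have h5 : p • (mulx (mulx (mulx (mulx (mulx c))))
      - b₂ • (((X : ℤ[X]) ^ (γ - 2)) • xpow 7)
      - b₁ • (((X : ℤ[X]) ^ (γ - 1)) • xpow 6))
      = a₀ • (((X : ℤ[X]) ^ γ) • xpow 5) := by
    have := congrArg mulx h4
    simp only [map_add, map_sub, map_zsmul, LinearMap.map_smul, hmul] at this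
    norm_num at this
    rw [smul_sub, this, hb₁, mul_smul]
    abel
  have ha0 : p ∣ a₀ := by
    have := congrArg π h5
    simp [map_add, map_sub, map_zsmul, LinearMap.map_smul, hπ γ 5] at this
    exact key a₀ γ _ this.symm
  obtain ⟨b₀, hb₀⟩ := ha0
  refine ⟨⟨⟨b₂, hb₂⟩, ⟨b₁, hb₁⟩, ⟨b₀, hb₀⟩⟩, b₀, b₁, b₂, hb₀, hb₁, hb₂, ?_⟩
  rw [smul_sub, hc, hb₀, hb₁, hb₂, smul_add, smul_add, mul_smul, mul_smul, mul_smul]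
  abel
end
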